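/- In the braid group Br_{n+1}, for j ≥ i+2, the identity (s_{j-1} ··· s_i² ··· s_{j-1})(s_j ··· s_i² ··· s_j) = (s_{j-1}s_j)(s_{j-2}s_{j-1}) ··· (s_{i+1}s_{i+2})(s_i s_{i+1}) s_{i+1} s_i (s_{i+1} ··· s_j)² holds. -/
import Mathlib


namespace BraidPaper

/-- The braid relations on `n` generators `s_1, ..., s_n` (indexed by `Fin n`):
far-away commutativity and the braid relation for adjacent generators.  The
corresponding presented group is the Artin braid group `Br_{n+1}`. -/
def braidRelsSet (n : ℕ) : Set (FreeGroup (Fin n)) :=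
  {r | (∃ i j : Fin n, (i : ℕ) + 2 ≤ (j : ℕ) ∧
        r = FreeGroup.of i * FreeGroup.of j * (FreeGroup.of i)⁻¹ * (FreeGroup.of j)⁻¹) ∨
       (∃ i j : Fin n, (i : ℕ) + 1 = (j : ℕ) ∧
        r = FreeGroup.of i * FreeGroup.of j * FreeGroup.of i *
            (FreeGroup.of j)⁻¹ * (FreeGroup.of i)⁻¹ * (FreeGroup.of j)⁻¹)}

/-- The Artin braid group `Br_{n+1}` on generators `s_1, ..., s_n`. -/
abbrev BraidGroup (n : ℕ) := PresentedGroup (braidRelsSet n)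

/-- The generator `s_i` of `Br_{n+1}`, for `1 ≤ i ≤ n` (junk value `1` otherwise). -/
def gen (n : ℕ) (i : ℕ) : BraidGroup n :=
  if h : 1 ≤ i ∧ i ≤ n then PresentedGroup.of (⟨i - 1, by omega⟩ : Fin n) else 1

/-- The descending product `s_j s_{j-1} ⋯ s_i` (equal to `1` if `j < i`). -/
def desc (n j i : ℕ) : BraidGroup n :=
  (((List.range' i (j + 1 - i)).reverse).map (gen n)).prod

/-- The ascending product `s_i s_{i+1} ⋯ s_j` (equal to `1` if `j < i`). -/
def asc (n i j : ℕ) : BraidGroup n :=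
  ((List.range' i (j + 1 - i)).map (gen n)).prod

/-- The standard lift `ℓ_{i,j} = (s_i)(s_{i+1}s_i)⋯(s_j⋯s_i)` of the longest element
over the interval `[i,j]`, with the convention `ℓ_{i,j} = 1` when `j < i`. -/
def ell (n i j : ℕ) : BraidGroup n :=
  ((List.range' i (j + 1 - i)).map (fun k => desc n k i)).prod

/-! ### Auxiliary lemmas -/

theorem rel_one {n : ℕ} {r : FreeGroup (Fin n)} (h : r ∈ braidRelsSet n) :
    PresentedGroup.mk (braidRelsSet n) r = 1 := by
  exact (QuotientGroup.eq_one_iff r).mpr (Subgroup.subset_normalClosure h)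

theorem gen_comm {n a b : ℕ} (h : a + 2 ≤ b) : gen n a * gen n b = gen n b * gen n a := by
  unfold gen
  split_ifs with h1 h2 h2
  · have key : PresentedGroup.mk (braidRelsSet n)
        (FreeGroup.of (⟨a-1, by omega⟩ : Fin n) * FreeGroup.of (⟨b-1, by omega⟩ : Fin n) *
          (FreeGroup.of (⟨a-1, by omega⟩ : Fin n))⁻¹ *
          (FreeGroup.of (⟨b-1, by omega⟩ : Fin n))⁻¹) = 1 := by
      apply rel_one
      exact Or.inl ⟨⟨a-1, by omega⟩, ⟨b-1, by omega⟩, by simp; omega, rfl⟩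
    simp only [map_mul, map_inv] at key
    rw [mul_inv_eq_one, mul_inv_eq_iff_eq_mul] at key
    exact key
  · simp
  · simp
  · simp

theorem braid_rel {n a : ℕ} (ha : 1 ≤ a) (han : a + 1 ≤ n) :
    gen n a * gen n (a+1) * gen n a = gen n (a+1) * gen n a * gen n (a+1) := by
  have h1 : 1 ≤ a ∧ a ≤ n := ⟨ha, by omega⟩
  have h2 : 1 ≤ a + 1 ∧ a + 1 ≤ n := ⟨by omega, han⟩
  unfold gen
  rw [dif_pos h1, dif_pos h2]
  have key : PresentedGroup.mk (braidRelsSet n)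
      (FreeGroup.of (⟨a-1, by omega⟩ : Fin n) * FreeGroup.of (⟨a+1-1, by omega⟩ : Fin n) *
        FreeGroup.of (⟨a-1, by omega⟩ : Fin n) * (FreeGroup.of (⟨a+1-1, by omega⟩ : Fin n))⁻¹ *
        (FreeGroup.of (⟨a-1, by omega⟩ : Fin n))⁻¹ *
        (FreeGroup.of (⟨a+1-1, by omega⟩ : Fin n))⁻¹) = 1 := by
    apply rel_one
    exact Or.inr ⟨⟨a-1, by omega⟩, ⟨a+1-1, by omega⟩, by simp; omega, rfl⟩
  simp only [map_mul, map_inv] at key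
  set x := PresentedGroup.mk (braidRelsSet n) (FreeGroup.of (⟨a-1, by omega⟩ : Fin n))
  set y := PresentedGroup.mk (braidRelsSet n) (FreeGroup.of (⟨a+1-1, by omega⟩ : Fin n))
  show x * y * x = y * x * y
  have h3 : x * y * x * (y * x * y)⁻¹ = 1 := by rw [← key]; group
  rw [mul_inv_eq_one] at h3
  exact h3

theorem gen_comm' {n a b : ℕ} (h : a + 2 ≤ b) : Commute (gen n b) (gen n a) :=
  (gen_comm h).symm

theorem desc_self (n i : ℕ) : desc n i i = gen n i := by
  simp [desc, show i + 1 - i = 1 by omega, List.range']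

theorem asc_self (n i : ℕ) : asc n i i = gen n i := by
  simp [asc, show i + 1 - i = 1 by omega, List.range']

theorem desc_succ (n i j : ℕ) (h : i ≤ j + 1) :
    desc n (j+1) i = gen n (j+1) * desc n j i := by
  have h2 : j + 1 + 1 - i = (j + 1 - i) + 1 := by omega
  rw [desc, h2, List.range'_concat, desc]
  simp [show i + (j+1-i) = j+1 by omega]

theorem asc_succ (n i j : ℕ) (h : i ≤ j + 1) :
    asc n i (j+1) = asc n i j * gen n (j+1) := by
  have h2 : j + 1 + 1 - i = (j + 1 - i) + 1 := by omega
  rw [asc, h2, List.range'_concat, asc]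
  simp [show i + (j+1-i) = j+1 by omega]

theorem commute_desc {n i k m : ℕ} (h : k + 2 ≤ m) : Commute (gen n m) (desc n k i) := by
  apply Commute.list_prod_right
  intro x hx
  simp only [List.mem_map, List.mem_reverse, List.mem_range'_1] at hx
  obtain ⟨y, ⟨hy1, hy2⟩, rfl⟩ := hx
  exact gen_comm' (by omega)

theorem commute_asc {n i k m : ℕ} (h : k + 2 ≤ m) : Commute (gen n m) (asc n i k) := by
  apply Commute.list_prod_right
  intro x hx
  simp only [List.mem_map, List.mem_range'_1] at hx
  obtain ⟨y, ⟨hy1, hy2⟩, rfl⟩ := hx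
  exact gen_comm' (by omega)

/-- Abstract conjugation identity used in the inductive step. -/
theorem step_conj {G : Type*} [Group G] (t s u : G)
    (hbraid : s * u * s = u * s * u) (hcomm : u * t = t * u) :
    (s * t * s) * (u * (s * t * s) * u) = s * u * (t * (s * t * s)) * (u * s) := by
  have hb' : ∀ x : G, s * (u * (s * x)) = u * (s * (u * x)) := fun x => by
    rw [show s * (u * (s * x)) = (s * u * s) * x by group, hbraid]; group
  have hc' : ∀ x : G, u * (t * x) = t * (u * x) := fun x => by
    rw [show u * (t * x) = (u * t) * x by group, hcomm]; group
  simp only [mul_assoc]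
  -- word: s t s u s t s u  →  s u t s t s u s
  rw [show s * (t * (s * (u * (s * (t * (s * u)))))) =
        s * (t * (u * (s * (u * (t * (s * u)))))) by
      congr 1; congr 1; rw [show s * (u * (s * (t * (s * u)))) = (s*u*s) * (t * (s * u)) by group,
        hbraid]; group]
  rw [show t * (u * (s * (u * (t * (s * u))))) = u * (t * (s * (u * (t * (s * u))))) from
    (hc' _).symm]
  nth_rewrite 2 [hc' _]
  rw [show u * (s * u) = s * (u * s) by
    rw [show u * (s * u) = u * s * u by group, ← hbraid]; group]


/-- `(s_{j-1} ⋯ s_i² ⋯ s_{j-1})(s_j ⋯ s_i² ⋯ s_j)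
  = (s_{j-1}s_j)(s_{j-2}s_{j-1}) ⋯ (s_{i+1}s_{i+2})(s_i s_{i+1}) s_{i+1} s_i (s_{i+1} ⋯ s_j)²`
for `j ≥ i+2`. -/
theorem palindrome_product_identity' (n i j : ℕ) (hi : 1 ≤ i) (hij : i + 2 ≤ j) (hj : j ≤ n) :
    (desc n (j - 1) i * asc n i (j - 1)) * (desc n j i * asc n i j) =
      (((List.range' i (j - i)).reverse).map (fun m => gen n m * gen n (m + 1))).prod *
        gen n (i + 1) * gen n i * (asc n (i + 1) j) ^ 2 := by
  revert hj
  induction j, hij using Nat.le_induction with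
  | base =>
    intro hn
    have e1 : i + 2 - 1 = i + 1 := by omega
    have e2 : i + 2 - i = 2 := by omega
    have er : List.range' i 2 = [i, i+1] := by simp [List.range']
    rw [e1, e2, er]
    have hd1 : desc n (i+1) i = gen n (i+1) * gen n i := by
      rw [desc_succ n i i (by omega), desc_self]
    have hd2 : desc n (i+2) i = gen n (i+2) * (gen n (i+1) * gen n i) := by
      rw [show i+2 = (i+1)+1 from rfl, desc_succ n i (i+1) (by omega), hd1]
    have ha1 : asc n i (i+1) = gen n i * gen n (i+1) := by
      rw [asc_succ n i i (by omega), asc_self]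
    have ha2 : asc n i (i+2) = gen n i * gen n (i+1) * gen n (i+2) := by
      rw [show i+2 = (i+1)+1 from rfl, asc_succ n i (i+1) (by omega), ha1]
    have ha3 : asc n (i+1) (i+2) = gen n (i+1) * gen n (i+2) := by
      rw [show i+2 = (i+1)+1 from rfl, asc_succ n (i+1) (i+1) (by omega), asc_self]
    rw [hd1, hd2, ha1, ha2, ha3]
    simp only [List.reverse_cons, List.reverse_nil, List.nil_append, List.cons_append,
      List.map_cons, List.map_nil, List.prod_cons, List.prod_nil, pow_two, mul_one]
    simp only [show i+1+1 = i+2 from rfl]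
    set a := gen n i
    set b := gen n (i+1)
    set c := gen n (i+2)
    have hab : a * b * a = b * a * b := braid_rel hi (by omega)
    have hbc : b * c * b = c * b * c := braid_rel (by omega) (by omega)
    have hac : a * c = c * a := gen_comm (by omega)
    have hab' : ∀ x : BraidGroup n, a*(b*(a*x)) = b*(a*(b*x)) := fun x => by
      rw [show a*(b*(a*x)) = (a*b*a)*x by group, hab]; group
    have hbc' : ∀ x : BraidGroup n, b*(c*(b*x)) = c*(b*(c*x)) := fun x => by
      rw [show b*(c*(b*x)) = (b*c*b)*x by group, hbc]; group
    have hac' : ∀ x : BraidGroup n, a*(c*x) = c*(a*x) := fun x => by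
      rw [show a*(c*x) = (a*c)*x by group, hac]; group
    simp only [mul_assoc]
    -- LHS word: b a a b c b a a b c ; RHS word: b c a b b a b c b c
    rw [hbc']            -- baabcbaabc → baacbcaabc
    rw [hac']            -- → bacabcaabc
    rw [hac']            -- → bcaabcaabc
    nth_rewrite 2 [← hac']  -- → bcaabacabc
    rw [hab']            -- → bcababcabc
    nth_rewrite 2 [← hac']  -- → bcababacbc
    nth_rewrite 2 [hab']    -- → bcabbabcbc
    rfl
  | succ j hij IH =>
    intro hn
    obtain ⟨m, rfl⟩ : ∃ m, j = m + 1 := ⟨j - 1, by omega⟩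
    simp only [Nat.add_sub_cancel] at IH ⊢
    have hT1 : desc n (m+1) i * asc n i (m+1) =
        gen n (m+1) * (desc n m i * asc n i m) * gen n (m+1) := by
      rw [desc_succ n i m (by omega), asc_succ n i m (by omega)]; group
    have hT2 : desc n (m+1+1) i * asc n i (m+1+1) =
        gen n (m+1+1) * (gen n (m+1) * (desc n m i * asc n i m) * gen n (m+1)) *
          gen n (m+1+1) := by
      rw [desc_succ n i (m+1) (by omega), asc_succ n i (m+1) (by omega),
        desc_succ n i m (by omega), asc_succ n i m (by omega)]
      group
    have hP : List.range' i (m+1+1-i) = List.range' i (m+1-i) ++ [m+1] := by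
      rw [show m+1+1-i = (m+1-i)+1 by omega, List.range'_concat]
      congr 2; omega
    have hA2 : asc n (i+1) (m+1+1) = asc n (i+1) (m+1) * gen n (m+1+1) :=
      asc_succ n (i+1) (m+1) (by omega)
    rw [hP, hT1, hT2, hA2]
    simp only [List.reverse_append, List.reverse_cons, List.reverse_nil, List.nil_append,
      List.cons_append, List.map_cons, List.prod_cons]
    set s := gen n (m+1) with hs
    set u := gen n (m+1+1) with hu
    set t := desc n m i * asc n i m with ht
    set A := asc n (i+1) (m+1) with hA
    set P := ((List.range' i (m+1-i)).reverse.map (fun k => gen n k * gen n (k+1))).prod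
      with hPdef
    have hbraid : s * u * s = u * s * u := braid_rel (by omega) (by omega)
    have hcommt : u * t = t * u :=
      ((commute_desc (by omega)).mul_right (commute_asc (by omega))).eq
    have key : A * u * s = u * A * u := by
      have hA' : A = asc n (i+1) m * s := asc_succ n (i+1) m (by omega)
      have hcA : u * asc n (i+1) m = asc n (i+1) m * u := (commute_asc (by omega)).eq
      rw [hA']
      calc asc n (i+1) m * s * u * s = asc n (i+1) m * (s * u * s) := by group
        _ = asc n (i+1) m * (u * s * u) := by rw [hbraid]
        _ = u * asc n (i+1) m * (s * u) := by
              rw [show asc n (i+1) m * (u * s * u) = asc n (i+1) m * u * (s * u) by group, ← hcA]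
        _ = u * (asc n (i+1) m * s) * u := by group
    have key2 : (A * u)^2 = A^2 * (u * s) := by
      rw [pow_two, pow_two]
      calc A * u * (A * u) = A * (u * A * u) := by group
        _ = A * (A * u * s) := by rw [← key]
        _ = A * A * (u * s) := by group
    have hstep := step_conj t s u hbraid hcommt
    have hIH := IH (by omega)
    rw [hT1] at hIH
    calc s * t * s * (u * (s * t * s) * u)
        = s * u * (t * (s * t * s)) * (u * s) := hstep
      _ = s * u * (P * gen n (i+1) * gen n i * A^2) * (u * s) := by rw [hIH]
      _ = s * u * P * gen n (i+1) * gen n i * (A^2 * (u * s)) := by group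
      _ = s * u * P * gen n (i+1) * gen n i * (A * u)^2 := by rw [key2]
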